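/- arXiv:2201.03143 — 2 statements merged into one kernel-verified Lean document; each statement's English description precedes it below -/
import Mathlib

section
/- Let a, b > 0 be real numbers with a/b irrational. For each pair (m, n) of nonnegative integers, the set {(m', n') ∈ ℤ≥0 × ℤ≥0 : am' + bn' < am + bn} is finite; moreover, the map sending (m, n) to the cardinality of this set is a bijection from ℤ≥0 × ℤ≥0 to ℤ≥0. -/
/-!
Irrationality of `a / b` makes the action `(m, n) ↦ a m + b n` injective, so it pulls back a
linear order on `ℕ × ℕ`, in which every element has finitely many predecessors as `a, b > 0`.
Counting predecessors in such an infinite order is a bijection onto `ℕ`: it is strictly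
monotone, and the predecessors of `p` realise every count below that of `p` by pigeonhole.
-/

open Function Set

namespace Set

variable {α β : Type*} [LinearOrder β] {f : α → β}

theorem ncard_setOf_lt_lt_of_lt (hfin : ∀ p, {q | f q < f p}.Finite) {p p' : α}
    (h : f p < f p') : {q | f q < f p}.ncard < {q | f q < f p'}.ncard :=
  ncard_lt_ncard ⟨fun _ hq => lt_trans hq h, fun hsub => lt_irrefl _ (hsub h)⟩ (hfin p')

theorem injective_ncard_setOf_lt (hf : Injective f) (hfin : ∀ p, {q | f q < f p}.Finite) :
    Injective fun p => {q | f q < f p}.ncard := by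
  intro p p' h
  by_contra hne
  rcases (hf.ne hne).lt_or_gt with hlt | hlt
  · exact (ncard_setOf_lt_lt_of_lt hfin hlt).ne h
  · exact (ncard_setOf_lt_lt_of_lt hfin hlt).ne' h

theorem image_ncard_setOf_lt (hf : Injective f) (hfin : ∀ p, {q | f q < f p}.Finite) (p : α) :
    (fun q => {r | f r < f q}.ncard) '' {q | f q < f p} = Iio {q | f q < f p}.ncard := by
  have hinj := (injective_ncard_setOf_lt hf hfin).injOn (s := {q | f q < f p})
  refine eq_of_subset_of_ncard_le ?_ ?_ (finite_Iio _)
  · rintro _ ⟨q, hq, rfl⟩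
    exact ncard_setOf_lt_lt_of_lt hfin hq
  · rw [ncard_Iio_nat, hinj.ncard_image]

theorem bijective_ncard_setOf_lt [Infinite α] (hf : Injective f)
    (hfin : ∀ p, {q | f q < f p}.Finite) : Bijective fun p => {q | f q < f p}.ncard := by
  refine ⟨injective_ncard_setOf_lt hf hfin, fun k => ?_⟩
  obtain ⟨_, ⟨p, rfl⟩, hkp⟩ :=
    (infinite_range_of_injective (injective_ncard_setOf_lt hf hfin)).exists_gt k
  obtain ⟨q, -, hq⟩ := (image_ncard_setOf_lt hf hfin p).ge hkp
  exact ⟨q, hq⟩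

end Set

theorem Irrational.injective_mul_add_mul_int {a b : ℝ} (hab : Irrational (a / b)) :
    Injective fun p : ℤ × ℤ => a * p.1 + b * p.2 := by
  rintro ⟨m, n⟩ ⟨m', n'⟩ h
  have hb : b ≠ 0 := by
    rintro rfl
    simp at hab
  have hrel : a / b * (m - m' : ℤ) + (n - n' : ℤ) = 0 := by
    field_simp
    push_cast
    linarith
  obtain rfl : m = m' := by
    by_contra hm
    exact ((hab.mul_intCast (sub_ne_zero.2 hm)).add_intCast _).ne_zero hrel
  simpa [hb] using h

theorem Irrational.injective_mul_add_mul_nat {a b : ℝ} (hab : Irrational (a / b)) :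
    Injective fun p : ℕ × ℕ => a * p.1 + b * p.2 := by
  have := hab.injective_mul_add_mul_int.comp
    (Prod.map_injective.2 ⟨Nat.cast_injective, Nat.cast_injective⟩)
  simpa [comp_def] using this

theorem finite_setOf_mul_add_mul_lt {a b : ℝ} (ha : 0 < a) (hb : 0 < b) (c : ℝ) :
    {q : ℕ × ℕ | a * q.1 + b * q.2 < c}.Finite := by
  refine (finite_Iic (⌈c / a⌉₊, ⌈c / b⌉₊)).subset fun q hq => ?_
  have hq : a * q.1 + b * q.2 < c := hq
  have hq₁ : a * q.1 < c := by linarith [mul_nonneg hb.le (Nat.cast_nonneg (α := ℝ) q.2)]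
  have hq₂ : b * q.2 < c := by linarith [mul_nonneg ha.le (Nat.cast_nonneg (α := ℝ) q.1)]
  exact ⟨(Nat.lt_ceil.2 ((lt_div_iff₀' ha).2 hq₁)).le, (Nat.lt_ceil.2 ((lt_div_iff₀' hb).2 hq₂)).le⟩

/-- Let `a, b > 0` with `a/b` irrational.  For each pair `(m, n)` of nonnegative integers, the
set `{(m', n') : a m' + b n' < a m + b n}` is finite; moreover, the map sending `(m, n)` to the
cardinality of this set is a bijection from `ℕ × ℕ` to `ℕ`.  (This encodes that the ECH index
is a bijection from orbit sets of `∂E(a,b)` to nonnegative even integers, with the symplectic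
action an increasing function of the ECH index.) -/
theorem ellipsoid_ech_index_bijection (a b : ℝ) (ha : 0 < a) (hb : 0 < b)
    (hab : Irrational (a / b)) :
    (∀ p : ℕ × ℕ,
      {q : ℕ × ℕ | a * q.1 + b * q.2 < a * p.1 + b * p.2}.Finite) ∧
    Function.Bijective
      (fun p : ℕ × ℕ => {q : ℕ × ℕ | a * q.1 + b * q.2 < a * p.1 + b * p.2}.ncard) := by
  have hfin (p : ℕ × ℕ) := finite_setOf_mul_add_mul_lt ha hb (a * p.1 + b * p.2)
  exact ⟨hfin, bijective_ncard_setOf_lt hab.injective_mul_add_mul_nat hfin⟩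
end

section
/- Let a > 0 be a real number, let Ω = {(x, y) ∈ ℝ² : x ≥ 0, y ≥ 0, x + y ≤ a}, and let k be a nonnegative integer. Then the minimum of ℓ_Ω(Λ) over all convex integral paths Λ with L̂(Λ) = k + 1 exists and equals d·a, where d is the unique nonnegative integer with d² + d ≤ 2k ≤ d² + 3d. -/
open scoped BigOperators

noncomputable section

/-- The cross product (determinant) of two vectors in `ℝ²`. -/
def cross (u w : ℝ × ℝ) : ℝ := u.1 * w.2 - u.2 * w.1

/-- Given a finite sequence of lattice points `p 0, …, p N`, the associated closed cyclic
vertex sequence `(0,0), p 0, …, p N` in `ℝ²` (the closing edge going from `p N` back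
to the origin). -/
def closedVerts {N : ℕ} (p : Fin (N + 1) → ℤ × ℤ) : Fin (N + 2) → ℝ × ℝ :=
  fun i => Fin.cases (motive := fun _ => ℝ × ℝ) ((0 : ℝ), (0 : ℝ))
    (fun j => (((p j).1 : ℝ), ((p j).2 : ℝ))) i

/-- A convex integral path: a finite sequence `p 0, …, p N` of lattice points in the
nonnegative quadrant with `p 0 = (0, b)` and `p N = (a, 0)` for some nonnegative integers
`a, b`, such that the closed polygonal curve through `(0,0), p 0, …, p N, (0,0)` traverses
clockwise the boundary of the convex region `R(Λ) = convexHull {(0,0), p 0, …, p N}`: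
every vertex lies weakly to the right of every directed edge (so the region bounded by the
path and the two axis segments is convex and the traversal is clockwise), the edges cover
all of the boundary of `R(Λ)`, and no vertex of the path is repeated. -/
structure ConvexIntegralPath where
  N : ℕ
  p : Fin (N + 1) → ℤ × ℤ
  inj : Function.Injective p
  nonneg : ∀ i, 0 ≤ (p i).1 ∧ 0 ≤ (p i).2
  start_on_axis : (p 0).1 = 0
  end_on_axis : (p (Fin.last N)).2 = 0
  clockwise : ∀ i j : Fin (N + 2),
    cross (closedVerts p (i + 1) - closedVerts p i) (closedVerts p j - closedVerts p i) ≤ 0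
  boundary : frontier (convexHull ℝ (Set.range (closedVerts p))) ⊆
    ⋃ i : Fin (N + 2), segment ℝ (closedVerts p i) (closedVerts p (i + 1))

namespace ConvexIntegralPath

/-- The convex region `R(Λ)` bounded by the path `Λ` and the two axis segments, i.e. the
convex hull of `(0,0), p 0, …, p N`. -/
def region (Λ : ConvexIntegralPath) : Set (ℝ × ℝ) :=
  convexHull ℝ (Set.range (closedVerts Λ.p))

/-- `L̂(Λ)`: the number of lattice points in the region `R(Λ)`, including lattice points on
the boundary. -/
def latticePointCount (Λ : ConvexIntegralPath) : ℕ :=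
  {q : ℤ × ℤ | (((q.1 : ℝ), (q.2 : ℝ)) : ℝ × ℝ) ∈ Λ.region}.ncard

end ConvexIntegralPath

/-- `Ω̂ = {μ ∈ ℝ² : (|μ₁|, |μ₂|) ∈ Ω}`. -/
def hatSet (Ω : Set (ℝ × ℝ)) : Set (ℝ × ℝ) := {μ | ((|μ.1|, |μ.2|) : ℝ × ℝ) ∈ Ω}

/-- The support function `‖v‖_Ω* = sup {⟨v, w⟩ : w ∈ Ω̂}`. -/
def dualNorm (Ω : Set (ℝ × ℝ)) (v : ℝ × ℝ) : ℝ :=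
  sSup {x : ℝ | ∃ w ∈ hatSet Ω, x = v.1 * w.1 + v.2 * w.2}

/-- `ℓ_Ω(Λ) = ∑_{i=1}^N ‖p i − p (i−1)‖_Ω*`, the length of the convex integral path `Λ`
measured in the norm `‖·‖_Ω*`. -/
def pathLength (Ω : Set (ℝ × ℝ)) (Λ : ConvexIntegralPath) : ℝ :=
  ∑ i : Fin Λ.N, dualNorm Ω
    ((((Λ.p i.succ).1 : ℝ) - ((Λ.p i.castSucc).1 : ℝ),
      ((Λ.p i.succ).2 : ℝ) - ((Λ.p i.castSucc).2 : ℝ)))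

/-!
For the triangle, `‖v‖_Ω* = a · max (|v₁|, |v₂|)`, so `ℓ_Ω(Λ)` is `a` times the sup-norm length
`L` of `Λ`. Walking from `(0, b)` to a vertex `p` and on to `(a, 0)` shows `p₁ + p₂ ≤ L`, so
`R(Λ)` lies in the triangle `x + y ≤ L`, which has `(L + 1)(L + 2)/2` lattice points; hence
`2(k + 1) ≤ (L + 1)(L + 2)`, which forces `L ≥ d`. Conversely, for `0 ≤ t ≤ d` the convex hull of
`(0,0), (0,d-1), (t,d-t), (d,0)` is bounded by a convex integral path of sup-norm length `d`, and
its lattice points are those of `x + y ≤ d` except `t` points on the hypotenuse; this realises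
every `k` with `d² + d ≤ 2k ≤ d² + 3d`.
-/

open Finset

abbrev triangle (a : ℝ) : Set (ℝ × ℝ) := {z | 0 ≤ z.1 ∧ 0 ≤ z.2 ∧ z.1 + z.2 ≤ a}

lemma convex_triangle (a : ℝ) : Convex ℝ (triangle a) :=
  (convex_halfSpace_ge (LinearMap.fst ℝ ℝ ℝ).isLinear 0).inter
    ((convex_halfSpace_ge (LinearMap.snd ℝ ℝ ℝ).isLinear 0).inter
      (convex_halfSpace_le (LinearMap.fst ℝ ℝ ℝ + LinearMap.snd ℝ ℝ ℝ).isLinear a))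

lemma exists_abs_eq_and_mul_eq_mul_abs {a : ℝ} (ha : 0 ≤ a) (x : ℝ) :
    ∃ s, |s| = a ∧ x * s = a * |x| := by
  rcases le_total 0 x with hx | hx
  · exact ⟨a, abs_of_nonneg ha, by rw [abs_of_nonneg hx, mul_comm]⟩
  · exact ⟨-a, by rw [abs_neg, abs_of_nonneg ha], by rw [abs_of_nonpos hx]; ring⟩

theorem dualNorm_triangle {a : ℝ} (ha : 0 ≤ a) (v : ℝ × ℝ) :
    dualNorm (triangle a) v = a * max |v.1| |v.2| := by
  refine IsGreatest.csSup_eq ⟨?_, ?_⟩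
  · rcases le_total |v.2| |v.1| with h | h
    · obtain ⟨s, hs, hvs⟩ := exists_abs_eq_and_mul_eq_mul_abs ha v.1
      exact ⟨(s, 0), by simp [hatSet, hs], by simp [hvs, max_eq_left h]⟩
    · obtain ⟨s, hs, hvs⟩ := exists_abs_eq_and_mul_eq_mul_abs ha v.2
      exact ⟨(0, s), by simp [hatSet, hs], by simp [hvs, max_eq_right h]⟩
  · rintro _ ⟨w, ⟨-, -, hw⟩, rfl⟩
    calc v.1 * w.1 + v.2 * w.2 ≤ |v.1| * |w.1| + |v.2| * |w.2| := by
          rw [← abs_mul, ← abs_mul]; exact add_le_add (le_abs_self _) (le_abs_self _)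
      _ ≤ max |v.1| |v.2| * |w.1| + max |v.1| |v.2| * |w.2| := by gcongr <;> simp
      _ ≤ a * max |v.1| |v.2| := by rw [← mul_add, mul_comm]; gcongr

lemma add_le_sum_max_abs_sub (f : ℕ → ℤ × ℤ) {i n : ℕ} (hin : i ≤ n) (h0 : (f 0).1 = 0)
    (hn : (f n).2 = 0) :
    (f i).1 + (f i).2 ≤
      ∑ j ∈ range n, max |(f (j + 1)).1 - (f j).1| |(f (j + 1)).2 - (f j).2| := by
  have h1 : (f i).1 ≤ ∑ j ∈ range i, max |(f (j + 1)).1 - (f j).1| |(f (j + 1)).2 - (f j).2| :=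
    calc (f i).1 = ∑ j ∈ range i, ((f (j + 1)).1 - (f j).1) := by
          rw [sum_range_sub (fun j => (f j).1), h0, sub_zero]
      _ ≤ _ := sum_le_sum fun j _ => (le_abs_self _).trans (le_max_left _ _)
  have h2 : (f i).2 ≤ ∑ j ∈ Ico i n, max |(f (j + 1)).1 - (f j).1| |(f (j + 1)).2 - (f j).2| :=
    calc (f i).2 = ∑ j ∈ Ico i n, ((f j).2 - (f (j + 1)).2) := by
          rw [sum_Ico_eq_sub _ hin, sum_range_sub', sum_range_sub', hn]; ring
      _ ≤ _ := sum_le_sum fun j _ =>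
          ((le_abs_self _).trans_eq (abs_sub_comm _ _)).trans (le_max_right _ _)
  rw [← sum_range_add_sum_Ico _ hin]
  exact add_le_add h1 h2

def latticeTriangle (m : ℤ) : Set (ℤ × ℤ) := {q | 0 ≤ q.1 ∧ 0 ≤ q.2 ∧ q.1 + q.2 ≤ m}

lemma latticeTriangle_finite (m : ℤ) : (latticeTriangle m).Finite :=
  ((Set.finite_Icc 0 m).prod (Set.finite_Icc 0 m)).subset fun q ⟨h1, h2, h3⟩ =>
    ⟨⟨h1, by omega⟩, ⟨h2, by omega⟩⟩

lemma antidiagonal_injective (m : ℤ) : Function.Injective fun x : ℤ => (x, m - x) :=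
  fun _ _ h => (Prod.mk.inj h).1

lemma ncard_antidiagonal_image_Ico (m t : ℤ) :
    ((fun x : ℤ => (x, m - x)) '' Set.Ico 0 t).ncard = t.toNat := by
  rw [Set.ncard_image_of_injective _ (antidiagonal_injective m), ← coe_Ico,
    Set.ncard_coe_finset, Int.card_Ico, sub_zero]

lemma two_mul_ncard_latticeTriangle (m : ℕ) :
    2 * (latticeTriangle m).ncard = (m + 1) * (m + 2) := by
  induction m with
  | zero =>
    have h0 : latticeTriangle 0 = {(0, 0)} := by
      ext ⟨x, y⟩
      simp only [latticeTriangle, Set.mem_ofPred_eq, Set.mem_singleton_iff, Prod.mk.injEq]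
      omega
    simp [h0]
  | succ m ih =>
    set D := (fun x : ℤ => (x, ↑(m + 1) - x)) '' Set.Ico 0 ↑(m + 2)
    have hsplit : latticeTriangle ↑(m + 1) = latticeTriangle m ∪ D := by
      ext ⟨x, y⟩
      simp only [D, latticeTriangle, Set.mem_ofPred_eq, Set.mem_union, Set.mem_image,
        Set.mem_Ico, Prod.mk.injEq]
      constructor
      · intro h
        by_cases hxy : x + y ≤ m
        · exact Or.inl ⟨h.1, h.2.1, hxy⟩
        · exact Or.inr ⟨x, ⟨h.1, by omega⟩, rfl, by omega⟩
      · rintro (h | ⟨x, hx, rfl, rfl⟩) <;> omega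
    have hdisj : Disjoint (latticeTriangle m) D := by
      rw [Set.disjoint_right]
      rintro _ ⟨x, -, rfl⟩ ⟨-, -, h⟩
      push_cast at h
      omega
    rw [hsplit, Set.ncard_union_eq hdisj (latticeTriangle_finite _) ((Set.finite_Ico _ _).image _),
      ncard_antidiagonal_image_Ico, Int.toNat_natCast]
    nlinarith [ih]

lemma Convex.smul_add_smul_mem_of_zero_mem {E : Type*} [AddCommGroup E] [Module ℝ E] {s : Set E}
    (hs : Convex ℝ s) (h0 : (0 : E) ∈ s) {x y : E} (hx : x ∈ s) (hy : y ∈ s) {α β : ℝ}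
    (hα : 0 ≤ α) (hβ : 0 ≤ β) (hαβ : α + β ≤ 1) : α • x + β • y ∈ s := by
  obtain hαβ0 | hpos := (add_nonneg hα hβ).eq_or_lt
  · obtain ⟨rfl, rfl⟩ : α = 0 ∧ β = 0 := ⟨by linarith, by linarith⟩
    simpa using h0
  · have hmem := hs.smul_mem_of_zero_mem h0 (convex_iff_div.1 hs hx hy hα hβ hpos)
      ⟨hpos.le, hαβ⟩
    rwa [smul_add, smul_smul, smul_smul, mul_div_cancel₀ _ hpos.ne',
      mul_div_cancel₀ _ hpos.ne'] at hmem

lemma mem_segment_of_sub_eq_smul {E : Type*} [AddCommGroup E] [Module ℝ E] {x y z : E} {θ : ℝ}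
    (hθ : θ ∈ Set.Icc 0 1) (h : z - x = θ • (y - x)) : z ∈ segment ℝ x y := by
  rw [segment_eq_image']
  exact ⟨θ, hθ, show x + θ • (y - x) = z by rw [← h, add_sub_cancel]⟩

lemma mem_segment_of_fst_mem_Icc {A B z : ℝ × ℝ} (hAB : A.1 < B.1) (hz : z.1 ∈ Set.Icc A.1 B.1)
    (hline : (B.1 - A.1) * (z.2 - A.2) = (B.2 - A.2) * (z.1 - A.1)) : z ∈ segment ℝ A B := by
  have hpos : 0 < B.1 - A.1 := sub_pos.2 hAB
  refine mem_segment_of_sub_eq_smul (θ := (z.1 - A.1) / (B.1 - A.1))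
    ⟨div_nonneg (by linarith [hz.1]) hpos.le, (div_le_one hpos).2 (by linarith [hz.2])⟩ ?_
  ext
  · simp [div_mul_cancel₀ _ hpos.ne']
  · simp only [Prod.snd_sub, Prod.smul_snd, smul_eq_mul]
    field_simp
    linarith

lemma mem_segment_of_snd_mem_Icc {A B z : ℝ × ℝ} (hAB : A.2 < B.2) (hz : z.2 ∈ Set.Icc A.2 B.2)
    (hline : (B.2 - A.2) * (z.1 - A.1) = (B.1 - A.1) * (z.2 - A.2)) : z ∈ segment ℝ A B := by
  have hpos : 0 < B.2 - A.2 := sub_pos.2 hAB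
  refine mem_segment_of_sub_eq_smul (θ := (z.2 - A.2) / (B.2 - A.2))
    ⟨div_nonneg (by linarith [hz.1]) hpos.le, (div_le_one hpos).2 (by linarith [hz.2])⟩ ?_
  ext
  · simp only [Prod.fst_sub, Prod.smul_fst, smul_eq_mul]
    field_simp
    linarith
  · simp [div_mul_cancel₀ _ hpos.ne']

lemma frontier_inter_setOf_le_subset {X : Type*} [TopologicalSpace X] {f g : X → ℝ}
    (hf : Continuous f) (hg : Continuous g) (s : Set X) :
    frontier ({x | f x ≤ g x} ∩ s) ⊆ {x | f x = g x} ∪ frontier s := fun _ hx =>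
  (frontier_inter_subset _ _ hx).imp (fun h => frontier_le_subset_eq hf hg h.1) And.right

def cappedQuadrant (α β γ δ : ℝ) : Set (ℝ × ℝ) :=
  {z | 0 ≤ z.1 ∧ 0 ≤ z.2 ∧ α * z.1 + β * z.2 ≤ γ ∧ z.1 + z.2 ≤ δ}

section cappedQuadrant

variable {α β γ δ : ℝ}

lemma convex_cappedQuadrant : Convex ℝ (cappedQuadrant α β γ δ) :=
  (convex_halfSpace_ge (LinearMap.fst ℝ ℝ ℝ).isLinear 0).inter
    ((convex_halfSpace_ge (LinearMap.snd ℝ ℝ ℝ).isLinear 0).inter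
      ((convex_halfSpace_le (α • LinearMap.fst ℝ ℝ ℝ + β • LinearMap.snd ℝ ℝ ℝ).isLinear γ).inter
        (convex_halfSpace_le (LinearMap.fst ℝ ℝ ℝ + LinearMap.snd ℝ ℝ ℝ).isLinear δ)))

lemma isClosed_cappedQuadrant : IsClosed (cappedQuadrant α β γ δ) :=
  (isClosed_le continuous_const continuous_fst).inter <|
    (isClosed_le continuous_const continuous_snd).inter <|
      (isClosed_le (f := fun z : ℝ × ℝ => α * z.1 + β * z.2) (by fun_prop) continuous_const).inter
        (isClosed_le (f := fun z : ℝ × ℝ => z.1 + z.2) (by fun_prop) continuous_const)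

lemma frontier_cappedQuadrant_subset {z : ℝ × ℝ} (hz : z ∈ frontier (cappedQuadrant α β γ δ)) :
    z.1 = 0 ∨ z.2 = 0 ∨ α * z.1 + β * z.2 = γ ∨ z.1 + z.2 = δ := by
  rcases frontier_inter_setOf_le_subset continuous_const continuous_fst _ hz with h | hz
  · exact Or.inl h.symm
  rcases frontier_inter_setOf_le_subset continuous_const continuous_snd _ hz with h | hz
  · exact Or.inr (Or.inl h.symm)
  rcases frontier_inter_setOf_le_subset (f := fun z : ℝ × ℝ => α * z.1 + β * z.2) (by fun_prop)
    continuous_const _ hz with h | hz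
  · exact Or.inr (Or.inr (Or.inl h))
  · exact Or.inr (Or.inr (Or.inr (frontier_le_subset_eq (f := fun z : ℝ × ℝ => z.1 + z.2)
      (by fun_prop) continuous_const hz)))

end cappedQuadrant

/-- For `0 ≤ t ≤ d` and `d ≥ 1`, the convex hull of `(0,0), (0,d-1), (t,d-t), (d,0)`. -/
def cornerRegion (d t : ℤ) : Set (ℝ × ℝ) := cappedQuadrant (t - 1) t (t * (d - 1)) d

lemma intCast_mem_cornerRegion_iff {d t : ℤ} {q : ℤ × ℤ} :
    ((q.1 : ℝ), (q.2 : ℝ)) ∈ cornerRegion d t ↔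
      0 ≤ q.1 ∧ 0 ≤ q.2 ∧ (t - 1) * q.1 + t * q.2 ≤ t * (d - 1) ∧ q.1 + q.2 ≤ d := by
  simp only [cornerRegion, cappedQuadrant, Set.mem_ofPred_eq]
  norm_cast

lemma two_mul_ncard_lattice_cornerRegion_add {d t : ℕ} (ht : t ≤ d) :
    2 * {q : ℤ × ℤ | ((q.1 : ℝ), (q.2 : ℝ)) ∈ cornerRegion d t}.ncard + 2 * t =
      (d + 1) * (d + 2) := by
  set L := {q : ℤ × ℤ | ((q.1 : ℝ), (q.2 : ℝ)) ∈ cornerRegion d t}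
  set D := (fun x : ℤ => (x, (d : ℤ) - x)) '' Set.Ico 0 (t : ℤ)
  have hL : L ⊆ latticeTriangle d := fun q hq => by
    obtain ⟨h1, h2, -, h4⟩ := intCast_mem_cornerRegion_iff.1 hq
    exact ⟨h1, h2, h4⟩
  have hsplit : latticeTriangle d = L ∪ D := by
    refine (Set.union_subset hL ?_).antisymm' fun q ⟨h1, h2, h3⟩ => ?_
    · rintro _ ⟨x, ⟨hx0, hxt⟩, rfl⟩
      refine ⟨hx0, ?_, ?_⟩ <;> dsimp only <;> omega
    · by_cases hq : q.1 + q.2 = d ∧ q.1 < t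
      · exact Or.inr ⟨q.1, ⟨h1, hq.2⟩, by ext <;> simp; omega⟩
      · refine Or.inl (intCast_mem_cornerRegion_iff.2 ⟨h1, h2, ?_, h3⟩)
        rcases not_and_or.1 hq with hq | hq
        · have hlt : q.1 + q.2 + 1 ≤ d := by omega
          nlinarith [Int.natCast_nonneg t]
        · nlinarith
  have hdisj : Disjoint L D := by
    rw [Set.disjoint_right]
    rintro _ ⟨x, ⟨-, hxt⟩, rfl⟩ hx
    obtain ⟨-, -, h3, -⟩ := intCast_mem_cornerRegion_iff.1 hx
    nlinarith
  have h := two_mul_ncard_latticeTriangle d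
  rw [hsplit, Set.ncard_union_eq hdisj ((latticeTriangle_finite _).subset hL)
    ((Set.finite_Ico _ _).image _), ncard_antidiagonal_image_Ico, Int.toNat_natCast] at h
  omega

lemma closedVerts_eq_vecCons {N : ℕ} (p : Fin (N + 1) → ℤ × ℤ) :
    closedVerts p = Matrix.vecCons (0, 0) fun j => (((p j).1 : ℝ), ((p j).2 : ℝ)) := rfl

lemma closedVerts_triangle (c d : ℤ) :
    closedVerts ![(0, c), (d, 0)] = ![(0, 0), (0, (c : ℝ)), ((d : ℝ), 0)] := by
  ext i <;> fin_cases i <;> simp [closedVerts_eq_vecCons]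

lemma convexHull_closedVerts_triangle {c d : ℤ} (hc : 0 ≤ c) (hcd : c ≤ d) (hd : 0 < d) :
    convexHull ℝ (Set.range (closedVerts ![(0, c), (d, 0)])) =
      cappedQuadrant c d (c * d) d := by
  have hc' : (0 : ℝ) ≤ c := by exact_mod_cast hc
  have hd' : (0 : ℝ) < d := by exact_mod_cast hd
  rw [closedVerts_triangle]
  refine (convexHull_min ?_ convex_cappedQuadrant).antisymm fun z ⟨h1, h2, h3, h4⟩ => ?_
  · rw [Set.range_subset_iff]
    intro i
    fin_cases i <;> simp [cappedQuadrant, mul_comm, hc, hcd, hd.le, mul_nonneg hc' hd'.le]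
  · have hmem : ∀ i, ![(0, 0), (0, (c : ℝ)), ((d : ℝ), 0)] i ∈
        convexHull ℝ (Set.range ![(0, 0), (0, (c : ℝ)), ((d : ℝ), 0)]) :=
      fun i => subset_convexHull ℝ _ ⟨i, rfl⟩
    have hz : z = (z.2 / c) • ((0 : ℝ), (c : ℝ)) + (z.1 / d) • ((d : ℝ), (0 : ℝ)) := by
      ext
      · simp [div_mul_cancel₀ _ hd'.ne']
      · rcases eq_or_ne (c : ℝ) 0 with h0 | h0
        · simp only [h0] at h3 ⊢; simp; nlinarith
        · simp [div_mul_cancel₀ _ h0]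
    rw [hz]
    refine (convex_convexHull ℝ _).smul_add_smul_mem_of_zero_mem (hmem 0) (hmem 1) (hmem 2)
      (by positivity) (by positivity) ?_
    rcases eq_or_ne (c : ℝ) 0 with h0 | h0
    · simp only [h0, div_zero, zero_add]
      exact (div_le_one hd').2 (by linarith)
    · rw [div_add_div _ _ h0 hd'.ne', div_le_one (by positivity)]
      linarith

def triPath (c d : ℤ) (hc : 0 ≤ c) (hcd : c ≤ d) (hd : 0 < d) : ConvexIntegralPath where
  N := 1
  p := ![(0, c), (d, 0)]
  inj := by
    intro i j h
    fin_cases i <;> fin_cases j <;> simp_all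
  nonneg := by
    intro i
    fin_cases i <;> simp [hc, hd.le]
  start_on_axis := rfl
  end_on_axis := rfl
  clockwise := by
    have hc' : (0 : ℝ) ≤ c := by exact_mod_cast hc
    have hd' : (0 : ℝ) < d := by exact_mod_cast hd
    rw [closedVerts_triangle]
    intro i j
    fin_cases i <;> fin_cases j <;> simp [cross] <;> nlinarith
  boundary := by
    have hc' : (0 : ℝ) ≤ c := by exact_mod_cast hc
    have hd' : (0 : ℝ) < d := by exact_mod_cast hd
    rw [convexHull_closedVerts_triangle hc hcd hd, closedVerts_triangle]
    intro z hz
    obtain ⟨h1, h2, h3, h4⟩ := isClosed_cappedQuadrant.frontier_subset hz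
    refine Set.mem_iUnion.2 ?_
    rcases h2.eq_or_lt with h2 | h2
    · refine ⟨2, ?_⟩
      simp only [Fin.reduceAdd, Matrix.cons_val]
      rw [segment_symm]
      refine mem_segment_of_fst_mem_Icc hd' ⟨h1, ?_⟩ ?_
      · linarith
      · simp [← h2]
    rcases h1.eq_or_lt with h1 | h1
    · have hzc : z.2 ≤ c := by nlinarith
      refine ⟨0, ?_⟩
      simp only [Fin.reduceAdd, Matrix.cons_val]
      refine mem_segment_of_snd_mem_Icc (by linarith) ⟨h2.le, hzc⟩ ?_
      simp [← h1]
    have htight : (c : ℝ) * z.1 + d * z.2 = c * d := by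
      rcases frontier_cappedQuadrant_subset hz with h | h | h | h
      · linarith
      · linarith
      · exact h
      · nlinarith [mul_nonneg (sub_nonneg.2 (show (c : ℝ) ≤ d by exact_mod_cast hcd)) h2.le]
    refine ⟨1, ?_⟩
    simp only [Fin.reduceAdd, Matrix.cons_val]
    refine mem_segment_of_fst_mem_Icc hd' ⟨h1.le, by linarith⟩ ?_
    linear_combination htight

lemma closedVerts_quadrilateral (d t : ℤ) :
    closedVerts ![(0, d - 1), (t, d - t), (d, 0)] =
      ![(0, 0), (0, (d : ℝ) - 1), ((t : ℝ), (d : ℝ) - t), ((d : ℝ), 0)] := by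
  ext i <;> fin_cases i <;> simp [closedVerts_eq_vecCons]

lemma convexHull_closedVerts_quadrilateral {d t : ℤ} (ht : 1 ≤ t) (htd : t < d) :
    convexHull ℝ (Set.range (closedVerts ![(0, d - 1), (t, d - t), (d, 0)])) =
      cornerRegion d t := by
  have ht' : (1 : ℝ) ≤ t := by exact_mod_cast ht
  have htd' : (t : ℝ) + 1 ≤ d := by exact_mod_cast htd
  have ht0 : (0 : ℝ) < t := by linarith
  have hd1 : (0 : ℝ) < d - 1 := by linarith
  have hdt : (0 : ℝ) < d - t := by linarith
  have hd0 : (0 : ℝ) < d := by linarith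
  rw [closedVerts_quadrilateral]
  refine (convexHull_min ?_ convex_cappedQuadrant).antisymm fun z ⟨h1, h2, h3, h4⟩ => ?_
  · rw [Set.range_subset_iff]
    intro i
    fin_cases i <;> refine ⟨?_, ?_, ?_, ?_⟩ <;> simp <;> nlinarith
  · set V := ![(0, 0), (0, (d : ℝ) - 1), ((t : ℝ), (d : ℝ) - t), ((d : ℝ), 0)]
    have hmem : ∀ i, V i ∈ convexHull ℝ (Set.range V) := fun i => subset_convexHull ℝ _ ⟨i, rfl⟩
    have hconv := convex_convexHull ℝ (Set.range V)
    -- split along the diagonal from the origin to `(t, d - t)`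
    rcases le_total (((d : ℝ) - t) * z.1) (t * z.2) with hside | hside
    · have hz : z = ((t * z.2 - (d - t) * z.1) / (t * (d - 1))) • ((0 : ℝ), (d : ℝ) - 1)
          + (z.1 / t) • ((t : ℝ), (d : ℝ) - t) := by
        ext
        · simp; field_simp
        · simp; field_simp; ring
      rw [hz]
      refine hconv.smul_add_smul_mem_of_zero_mem (hmem 0) (hmem 1) (hmem 2)
        (div_nonneg (by linarith) (by positivity)) (by positivity) ?_
      rw [div_add_div _ _ (by positivity) ht0.ne', div_le_one (by positivity)]
      nlinarith
    · have hz : z = (z.2 / (d - t)) • ((t : ℝ), (d : ℝ) - t)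
          + (((d - t) * z.1 - t * z.2) / (d * (d - t))) • ((d : ℝ), (0 : ℝ)) := by
        ext
        · simp; field_simp; ring
        · simp; field_simp
      rw [hz]
      refine hconv.smul_add_smul_mem_of_zero_mem (hmem 0) (hmem 2) (hmem 3)
        (div_nonneg h2 hdt.le) (div_nonneg (by linarith) (by positivity)) ?_
      rw [div_add_div _ _ hdt.ne' (by positivity), div_le_one (by positivity)]
      nlinarith [mul_le_mul_of_nonneg_left h4 hdt.le]

def quadPath (d t : ℤ) (ht : 1 ≤ t) (htd : t < d) : ConvexIntegralPath where
  N := 2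
  p := ![(0, d - 1), (t, d - t), (d, 0)]
  inj := by
    intro i j h
    fin_cases i <;> fin_cases j <;> simp [Prod.ext_iff] at h ⊢ <;> omega
  nonneg := by
    intro i
    fin_cases i <;> simp <;> omega
  start_on_axis := rfl
  end_on_axis := rfl
  clockwise := by
    have ht' : (1 : ℝ) ≤ t := by exact_mod_cast ht
    have htd' : (t : ℝ) + 1 ≤ d := by exact_mod_cast htd
    rw [closedVerts_quadrilateral]
    intro i j
    fin_cases i <;> fin_cases j <;> simp [cross] <;> nlinarith
  boundary := by
    have ht' : (1 : ℝ) ≤ t := by exact_mod_cast ht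
    have htd' : (t : ℝ) + 1 ≤ d := by exact_mod_cast htd
    rw [convexHull_closedVerts_quadrilateral ht htd, closedVerts_quadrilateral]
    intro z hz
    obtain ⟨h1, h2, h3, h4⟩ := isClosed_cappedQuadrant.frontier_subset hz
    refine Set.mem_iUnion.2 ?_
    rcases h2.eq_or_lt with h2 | h2
    · refine ⟨3, ?_⟩
      simp only [Fin.reduceAdd, Matrix.cons_val]
      rw [segment_symm]
      refine mem_segment_of_fst_mem_Icc (by linarith) ⟨h1, by linarith⟩ ?_
      simp [← h2]
    rcases h1.eq_or_lt with h1 | h1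
    · refine ⟨0, ?_⟩
      simp only [Fin.reduceAdd, Matrix.cons_val]
      refine mem_segment_of_snd_mem_Icc (by simp; linarith) ⟨h2.le, by simp; nlinarith⟩ ?_
      simp [← h1]
    rcases frontier_cappedQuadrant_subset (z := z) hz with h | h | h | h
    · linarith
    · linarith
    · refine ⟨1, ?_⟩
      simp only [Fin.reduceAdd, Matrix.cons_val]
      refine mem_segment_of_fst_mem_Icc (by simp; linarith) ⟨h1.le, by simp; nlinarith⟩ ?_
      simp only
      linear_combination h
    · refine ⟨2, ?_⟩
      simp only [Fin.reduceAdd, Matrix.cons_val]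
      refine mem_segment_of_fst_mem_Icc (by simp; linarith)
        ⟨by simp; nlinarith, by simp; linarith⟩ ?_
      simp only
      linear_combination ((d : ℝ) - t) * h

lemma closedVerts_point : closedVerts ![((0 : ℤ), (0 : ℤ))] = fun _ => 0 := by
  ext i <;> fin_cases i <;> simp [closedVerts_eq_vecCons]

def pointPath : ConvexIntegralPath where
  N := 0
  p := ![(0, 0)]
  inj i j _ := by fin_cases i; fin_cases j; rfl
  nonneg i := by fin_cases i; simp
  start_on_axis := rfl
  end_on_axis := rfl
  clockwise := by simp [closedVerts_point, cross]
  boundary := by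
    rw [closedVerts_point, Set.range_const, convexHull_singleton,
      isClosed_singleton.frontier_eq, interior_singleton, Set.sdiff_empty]
    rintro _ rfl
    exact Set.mem_iUnion.2 ⟨0, left_mem_segment ℝ _ _⟩

namespace ConvexIntegralPath

def supLength (Λ : ConvexIntegralPath) : ℕ :=
  ∑ i : Fin Λ.N, max ((Λ.p i.succ).1 - (Λ.p i.castSucc).1).natAbs
    ((Λ.p i.succ).2 - (Λ.p i.castSucc).2).natAbs

lemma vertex_add_le_supLength (Λ : ConvexIntegralPath) (i : Fin (Λ.N + 1)) :
    (Λ.p i).1 + (Λ.p i).2 ≤ Λ.supLength := by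
  set f : ℕ → ℤ × ℤ := fun n => Λ.p ⟨min n Λ.N, by omega⟩
  have hf : ∀ n (h : n ≤ Λ.N), f n = Λ.p ⟨n, by omega⟩ := fun n h => by simp [f, min_eq_left h]
  have key := add_le_sum_max_abs_sub f (Nat.lt_succ_iff.mp i.isLt)
    (by rw [hf 0 (Nat.zero_le _)]; exact Λ.start_on_axis) (by rw [hf _ le_rfl]; exact Λ.end_on_axis)
  rw [hf _ (Nat.lt_succ_iff.mp i.isLt)] at key
  convert key using 1
  rw [supLength, Nat.cast_sum, ← Fin.sum_univ_eq_sum_range]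
  refine sum_congr rfl fun j _ => ?_
  rw [hf _ j.isLt, hf _ j.isLt.le]
  simp only [Nat.cast_max, Int.natCast_natAbs]
  rfl

lemma region_subset_triangle (Λ : ConvexIntegralPath) : Λ.region ⊆ triangle Λ.supLength := by
  refine convexHull_min ?_ (convex_triangle _)
  rintro _ ⟨i, rfl⟩
  induction i using Fin.cases with
  | zero => simp [closedVerts]
  | succ j =>
    have h3 := Λ.vertex_add_le_supLength j
    obtain ⟨h1, h2⟩ := Λ.nonneg j
    simp only [closedVerts, Fin.cases_succ, triangle, Set.mem_ofPred_eq]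
    refine ⟨?_, ?_, ?_⟩ <;> assumption_mod_cast

lemma two_mul_latticePointCount_le (Λ : ConvexIntegralPath) :
    2 * Λ.latticePointCount ≤ (Λ.supLength + 1) * (Λ.supLength + 2) := by
  rw [← two_mul_ncard_latticeTriangle]
  refine Nat.mul_le_mul_left 2 (Set.ncard_le_ncard (fun q hq => ?_) (latticeTriangle_finite _))
  obtain ⟨h1, h2, h3⟩ := Λ.region_subset_triangle hq
  dsimp only at h1 h2 h3
  refine ⟨?_, ?_, ?_⟩ <;> assumption_mod_cast

lemma two_mul_latticePointCount_add {Λ : ConvexIntegralPath} {d t : ℕ}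
    (hΛ : Λ.region = cornerRegion d t) (ht : t ≤ d) :
    2 * Λ.latticePointCount + 2 * t = (d + 1) * (d + 2) := by
  rw [latticePointCount, hΛ]
  exact two_mul_ncard_lattice_cornerRegion_add ht

lemma region_pointPath : pointPath.region = cornerRegion 0 0 := by
  change convexHull ℝ (Set.range (closedVerts ![((0 : ℤ), (0 : ℤ))])) = _
  rw [closedVerts_point, Set.range_const, convexHull_singleton]
  ext z
  simp only [Set.mem_singleton_iff, cornerRegion, cappedQuadrant, Set.mem_ofPred_eq, Prod.ext_iff,
    Prod.fst_zero, Prod.snd_zero]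
  constructor
  · rintro ⟨h1, h2⟩
    simp [h1, h2]
  · rintro ⟨h1, h2, -, h4⟩
    push_cast at h4
    exact ⟨by linarith, by linarith⟩

lemma region_triPath_pred {d : ℤ} (hd : 0 < d) :
    (triPath (d - 1) d (by omega) (by omega) hd).region = cornerRegion d d := by
  refine (convexHull_closedVerts_triangle (c := d - 1) (by omega) (by omega) hd).trans ?_
  rw [cornerRegion]
  push_cast
  rw [mul_comm]

lemma region_triPath_self {d : ℤ} (hd : 0 < d) :
    (triPath d d hd.le le_rfl hd).region = cornerRegion d 0 := by
  refine (convexHull_closedVerts_triangle hd.le le_rfl hd).trans ?_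
  ext z
  simp only [cornerRegion, cappedQuadrant, Set.mem_ofPred_eq, Int.cast_zero]
  constructor
  · rintro ⟨h1, h2, -, h4⟩
    exact ⟨h1, h2, by linarith, h4⟩
  · rintro ⟨h1, h2, -, h4⟩
    exact ⟨h1, h2, by nlinarith, h4⟩

lemma region_quadPath {d t : ℤ} (ht : 1 ≤ t) (htd : t < d) :
    (quadPath d t ht htd).region = cornerRegion d t :=
  convexHull_closedVerts_quadrilateral ht htd

lemma supLength_triPath {c d : ℤ} (hc : 0 ≤ c) (hcd : c ≤ d) (hd : 0 < d) :
    (triPath c d hc hcd hd).supLength = d := by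
  change ((∑ i : Fin 1, _ : ℕ) : ℤ) = d
  simp [triPath, abs_of_nonneg hc, abs_of_pos hd, hcd]

lemma supLength_quadPath {d t : ℤ} (ht : 1 ≤ t) (htd : t < d) :
    (quadPath d t ht htd).supLength = d := by
  change ((∑ i : Fin 2, _ : ℕ) : ℤ) = d
  simp [quadPath, Fin.sum_univ_two, abs_of_pos (by omega : 0 < t),
    abs_of_pos (by omega : 0 < d - t), abs_of_nonpos (by omega : 1 - t ≤ 0),
    abs_of_nonpos (by omega : t - d ≤ 0)]

theorem exists_region_eq_cornerRegion {d t : ℕ} (htd : t ≤ d) :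
    ∃ Λ : ConvexIntegralPath, Λ.region = cornerRegion d t ∧ Λ.supLength = d := by
  rcases Nat.eq_zero_or_pos d with rfl | hd
  · obtain rfl : t = 0 := by omega
    exact ⟨pointPath, region_pointPath, rfl⟩
  have hd' : (0 : ℤ) < d := by exact_mod_cast hd
  -- the quadrilateral path needs `0 < t < d`; at the ends the region is a triangle
  rcases htd.eq_or_lt with rfl | htd
  · exact ⟨_, region_triPath_pred hd', by simpa using supLength_triPath _ _ hd'⟩
  rcases Nat.eq_zero_or_pos t with rfl | ht
  · exact ⟨_, region_triPath_self hd', by simpa using supLength_triPath _ _ hd'⟩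
  have ht' : (1 : ℤ) ≤ t := by exact_mod_cast ht
  have htd' : (t : ℤ) < d := by exact_mod_cast htd
  exact ⟨_, region_quadPath ht' htd', by simpa using supLength_quadPath ht' htd'⟩

end ConvexIntegralPath

theorem pathLength_triangle {a : ℝ} (ha : 0 ≤ a) (Λ : ConvexIntegralPath) :
    pathLength (triangle a) Λ = a * Λ.supLength := by
  simp only [pathLength, ConvexIntegralPath.supLength, dualNorm_triangle ha, Nat.cast_sum,
    Nat.cast_max, Nat.cast_natAbs, Int.cast_sub, Int.cast_abs, mul_sum]

/-- For the triangle `Ω = {(x,y) : x, y ≥ 0, x + y ≤ a}` (so that `X_Ω` is the ball `B⁴(a)`)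
and `k ≥ 0`, the minimum of `ℓ_Ω(Λ)` over convex integral paths `Λ` with `L̂(Λ) = k + 1`
exists and equals `d·a`, where `d` is the unique nonnegative integer with
`d² + d ≤ 2k ≤ d² + 3d`. -/
theorem ball_capacity_formula (a : ℝ) (ha : 0 < a) (k d : ℕ)
    (hd : d ^ 2 + d ≤ 2 * k ∧ 2 * k ≤ d ^ 2 + 3 * d) :
    IsLeast {x : ℝ | ∃ Λ : ConvexIntegralPath, Λ.latticePointCount = k + 1 ∧
        x = pathLength {v : ℝ × ℝ | 0 ≤ v.1 ∧ 0 ≤ v.2 ∧ v.1 + v.2 ≤ a} Λ}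
      (d * a) := by
  -- `t` is the number of lattice points of the hypotenuse `x + y = d` to be cut off
  obtain ⟨t, htd, hkt⟩ : ∃ t ≤ d, 2 * (k + 1) + 2 * t = (d + 1) * (d + 2) := by
    obtain ⟨m, hm⟩ := Nat.even_mul_succ_self d
    have hm' : d ^ 2 + d = m + m := by rw [← hm]; ring
    have hsq : (d + 1) * (d + 2) = d ^ 2 + 3 * d + 2 := by ring
    exact ⟨m + d - k, by omega, by omega⟩
  refine ⟨?_, ?_⟩
  · obtain ⟨Λ, hΛ, hlen⟩ := ConvexIntegralPath.exists_region_eq_cornerRegion htd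
    refine ⟨Λ, ?_, by rw [pathLength_triangle ha.le, hlen, mul_comm]⟩
    have := Λ.two_mul_latticePointCount_add hΛ htd
    omega
  · rintro _ ⟨Λ, hΛ, rfl⟩
    rw [pathLength_triangle ha.le, mul_comm]
    have hcount := Λ.two_mul_latticePointCount_le
    have hdL : d ≤ Λ.supLength := by
      by_contra! h
      nlinarith [Nat.mul_le_mul h (Nat.succ_le_succ h)]
    gcongr
end
end
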